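/- Let f_n : ℝ → ℝ be defined by f_n(t) = (2n/√π)·exp(−(n t)²) for t ≤ 0 and f_n(t) = 0 for t > 0. Let t₀ ∈ ℝ, e > 0, and let g : ℝ → ℝ be continuously differentiable on [t₀ − e, t₀ + e] with g(t₀) = 0 and g'(t) < 0 for all t ∈ [t₀ − e, t₀ + e]. Then lim_{n→∞} ∫_{t₀−e}^{t₀+e} f_n(g(t)) dt = 1/|g'(t₀)|. -/

import Mathlib

open MeasureTheory Real Filter Topology

/-- One-sided Gaussian approximating sequence for the Dirac-delta-like
distribution `δ*`. -/
noncomputable def f (n : ℕ) (t : ℝ) : ℝ :=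
  if t ≤ 0 then (2 * n / Real.sqrt π) * Real.exp (-(n * t) ^ 2) else 0

/-!
Since `f n x = n * f 1 (n * x)`, the substitution `t = t₀ + s / n` turns the integral into
`∫ s in -(n * e)..n * e, f 1 (n * g (s / n + t₀))`. The rescaled function `n * g (s / n + t₀)`
tends to `g' t₀ * s`, and since `g' ≤ -m < 0` on the interval, the mean value theorem gives
`|n * g (s / n + t₀)| ≥ m * |s|`, so the integrands are dominated by the Gaussian
`2 / √π * exp (-(m * s) ^ 2)`. Dominated convergence yields the limit
`∫ s, f 1 (g' t₀ * s) = |g' t₀|⁻¹ * ∫ x, f 1 x = 1 / |g' t₀|`.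
-/

lemma f_one_eq_indicator :
    f 1 = (Set.Iic 0).indicator fun x => 2 / √π * exp (-x ^ 2) := by
  ext x
  simp [f, Set.indicator_apply]

lemma f_eq_mul_f_one {n : ℕ} (hn : n ≠ 0) (x : ℝ) : f n x = n * f 1 (n * x) := by
  have hsign : (n : ℝ) * x ≤ 0 ↔ x ≤ 0 := by
    rw [← not_lt, ← not_lt, mul_pos_iff_of_pos_left (by positivity)]
  simp only [f, Nat.cast_one, one_mul, hsign]
  split_ifs <;> ring

lemma measurable_f (n : ℕ) : Measurable (f n) :=
  Measurable.ite measurableSet_Iic (by fun_prop) measurable_const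

lemma continuousAt_f (n : ℕ) {x : ℝ} (hx : x ≠ 0) : ContinuousAt (f n) x := by
  rcases hx.lt_or_gt with hx | hx
  · refine ContinuousAt.congr (f := fun t => 2 * n / √π * exp (-(n * t) ^ 2)) (by fun_prop) ?_
    filter_upwards [Iio_mem_nhds hx] with t ht
    simp [f, ht.out.le]
  · refine ContinuousAt.congr (f := fun _ => 0) continuousAt_const ?_
    filter_upwards [Ioi_mem_nhds hx] with t ht
    simp [f, not_le.mpr ht.out]

lemma norm_f_one_le {x y : ℝ} (h : |y| ≤ |x|) : ‖f 1 x‖ ≤ 2 / √π * exp (-y ^ 2) := by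
  rw [f_one_eq_indicator, norm_indicator_eq_indicator_norm]
  refine (Set.indicator_le_self' fun _ _ => norm_nonneg _) x |>.trans ?_
  rw [Real.norm_of_nonneg (by positivity)]
  exact mul_le_mul_of_nonneg_left (exp_le_exp.mpr (neg_le_neg (sq_le_sq.mpr h))) (by positivity)

lemma integral_f_one : ∫ x, f 1 x = 1 := by
  rw [f_one_eq_indicator, integral_indicator measurableSet_Iic, ← neg_zero,
    ← integral_comp_neg_Ioi, integral_const_mul]
  simp only [neg_sq, ← neg_one_mul (_ ^ 2), integral_gaussian_Ioi, div_one]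
  have : √π ≠ 0 := (sqrt_pos.mpr pi_pos).ne'
  field_simp

lemma integral_f_one_comp_mul (c : ℝ) : ∫ s, f 1 (c * s) = |c|⁻¹ := by
  rw [Measure.integral_comp_mul_left, integral_f_one, abs_inv, smul_eq_mul, mul_one]

lemma Convex.mul_abs_sub_le_abs_sub_of_hasDerivAt_le_neg {D : Set ℝ} (hD : Convex ℝ D)
    {g g' : ℝ → ℝ} {m : ℝ} (hg : ∀ t ∈ D, HasDerivAt g (g' t) t)
    (hg' : ∀ t ∈ D, g' t ≤ -m)
    {x y : ℝ} (hx : x ∈ D) (hy : y ∈ D) : m * |y - x| ≤ |g y - g x| := by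
  wlog hxy : x ≤ y generalizing x y
  · rw [abs_sub_comm, abs_sub_comm (g y)]
    exact this hy hx (le_of_not_ge hxy)
  have hmvt := hD.image_sub_le_mul_sub_of_deriv_le (HasDerivAt.continuousOn hg)
    (fun t ht => (hg t (interior_subset ht)).differentiableAt.differentiableWithinAt)
    (fun t ht => (hg t (interior_subset ht)).deriv ▸ hg' t (interior_subset ht)) x hx y hy hxy
  rw [abs_of_nonneg (sub_nonneg.mpr hxy), abs_sub_comm]
  linarith [le_abs_self (g x - g y)]

lemma HasDerivAt.tendsto_natCast_mul_comp_div_add {g : ℝ → ℝ} {c t₀ : ℝ}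
    (hg : HasDerivAt g c t₀) (hg0 : g t₀ = 0) (s : ℝ) :
    Tendsto (fun n : ℕ => n * g (s / n + t₀)) atTop (𝓝 (c * s)) := by
  have hk : HasDerivAt (fun h => g (s * h + t₀)) (c * s) 0 := by
    simpa [Function.comp_def] using
      HasDerivAt.comp_of_eq 0 hg (((hasDerivAt_id 0).const_mul s).add_const t₀) (by simp)
  refine (hk.tendsto_slope_zero_right.comp
    (tendsto_inv_atTop_nhdsGT_zero.comp tendsto_natCast_atTop_atTop)).congr fun n => ?_
  simp [hg0, div_eq_mul_inv]

lemma mapsTo_div_add_Icc {c : ℝ} (hc : 0 < c) (t₀ e : ℝ) :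
    Set.MapsTo (fun s => s / c + t₀) (Set.Icc (-(c * e)) (c * e))
      (Set.Icc (t₀ - e) (t₀ + e)) := by
  intro s hs
  constructor
  · linarith [(le_div_iff₀ hc).mpr (by linarith [hs.1] : -e * c ≤ s)]
  · linarith [(div_le_iff₀ hc).mpr (by linarith [hs.2] : s ≤ e * c)]

lemma intervalIntegral_f_comp_eq {n : ℕ} (hn : n ≠ 0) (g : ℝ → ℝ) (t₀ e : ℝ) :
    ∫ t in (t₀ - e)..(t₀ + e), f n (g t) =
      ∫ s in (-(n * e))..(n * e), f 1 (n * g (s / n + t₀)) := by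
  have hn' : (n : ℝ) ≠ 0 := Nat.cast_ne_zero.mpr hn
  rw [intervalIntegral.integral_comp_div_add (f := fun t => f 1 (n * g t)) hn',
    neg_div, mul_div_cancel_left₀ e hn', smul_eq_mul, ← intervalIntegral.integral_const_mul]
  simp only [f_eq_mul_f_one hn, neg_add_eq_sub, add_comm e]

theorem tendsto_intervalIntegral_f_one_comp {G : ℕ → ℝ → ℝ} {a : ℕ → ℝ} {m c : ℝ}
    (hm : 0 < m) (hc : c ≠ 0) (ha : Tendsto a atTop atTop)
    (hcont : ∀ᶠ n in atTop, ContinuousOn (G n) (Set.Icc (-a n) (a n)))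
    (hbound : ∀ᶠ n in atTop, ∀ s ∈ Set.Icc (-a n) (a n), m * |s| ≤ |G n s|)
    (hlim : ∀ s, Tendsto (fun n => G n s) atTop (𝓝 (c * s))) :
    Tendsto (fun n => ∫ s in (-a n)..(a n), f 1 (G n s)) atTop (𝓝 (∫ s, f 1 (c * s))) := by
  set F : ℕ → ℝ → ℝ := fun n => (Set.Ioc (-a n) (a n)).indicator fun s => f 1 (G n s)
  have hF_meas : ∀ᶠ n in atTop, AEStronglyMeasurable (F n) := by
    filter_upwards [hcont] with n hn
    refine (aestronglyMeasurable_indicator_iff measurableSet_Ioc).mpr ?_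
    exact ((measurable_f 1).comp_aemeasurable
      ((hn.mono Set.Ioc_subset_Icc_self).aemeasurable measurableSet_Ioc)).aestronglyMeasurable
  have hF_bound : ∀ᶠ n in atTop, ∀ᵐ s, ‖F n s‖ ≤ 2 / √π * exp (-(m * s) ^ 2) := by
    filter_upwards [hbound] with n hn
    refine ae_of_all _ fun s => ?_
    simp only [F]
    by_cases hs : s ∈ Set.Ioc (-a n) (a n)
    · rw [Set.indicator_of_mem hs]
      refine norm_f_one_le ?_
      rw [abs_mul, abs_of_pos hm]
      exact hn s (Set.Ioc_subset_Icc_self hs)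
    · rw [Set.indicator_of_notMem hs, norm_zero]
      positivity
  have hbound_int : Integrable fun s : ℝ => 2 / √π * exp (-(m * s) ^ 2) := by
    simpa only [mul_pow, neg_mul] using (integrable_exp_neg_mul_sq (pow_pos hm 2)).const_mul _
  have hF_lim : ∀ᵐ s, Tendsto (fun n => F n s) atTop (𝓝 (f 1 (c * s))) := by
    -- `f 1` jumps at `0`, so the point `s = 0` has to be discarded
    filter_upwards [Measure.ae_ne volume 0] with s hs
    have hF_eq : ∀ᶠ n in atTop, f 1 (G n s) = F n s := by
      filter_upwards [ha.eventually_gt_atTop |s|] with n hn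
      have hs_mem : s ∈ Set.Ioc (-a n) (a n) := Set.Ioo_subset_Ioc_self (abs_lt.mp hn)
      exact (Set.indicator_of_mem hs_mem fun s => f 1 (G n s)).symm
    exact ((continuousAt_f 1 (mul_ne_zero hc hs)).tendsto.comp (hlim s)).congr' hF_eq
  refine (tendsto_integral_filter_of_dominated_convergence _ hF_meas hF_bound hbound_int
    hF_lim).congr' ?_
  filter_upwards [ha.eventually_ge_atTop 0] with n hn
  rw [intervalIntegral.integral_of_le (by linarith), integral_indicator measurableSet_Ioc]

theorem stmt_1 (t₀ e : ℝ) (he : 0 < e) (g g' : ℝ → ℝ)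
    (hderiv : ∀ t ∈ Set.Icc (t₀ - e) (t₀ + e), HasDerivAt g (g' t) t)
    (hcont : ContinuousOn g' (Set.Icc (t₀ - e) (t₀ + e)))
    (hg0 : g t₀ = 0)
    (hneg : ∀ t ∈ Set.Icc (t₀ - e) (t₀ + e), g' t < 0) :
    Tendsto (fun n : ℕ => ∫ t in (t₀ - e)..(t₀ + e), f n (g t)) atTop
      (𝓝 (1 / |g' t₀|)) := by
  have ht₀ : t₀ ∈ Set.Icc (t₀ - e) (t₀ + e) := ⟨by linarith, by linarith⟩
  obtain ⟨m, hm, hg'm⟩ : ∃ m > 0, ∀ t ∈ Set.Icc (t₀ - e) (t₀ + e), g' t ≤ -m := by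
    obtain ⟨x, hx, hmax⟩ := isCompact_Icc.exists_isMaxOn ⟨t₀, ht₀⟩ hcont
    exact ⟨-g' x, neg_pos.mpr (hneg x hx), fun t ht => (neg_neg (g' x)).symm ▸ hmax ht⟩
  rw [one_div, ← integral_f_one_comp_mul]
  refine (tendsto_intervalIntegral_f_one_comp (G := fun n s => n * g (s / n + t₀))
    (a := fun n => n * e) hm (hneg t₀ ht₀).ne
    (tendsto_natCast_atTop_atTop.atTop_mul_const he) ?_ ?_
    ((hderiv t₀ ht₀).tendsto_natCast_mul_comp_div_add hg0)).congr' ?_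
  · filter_upwards [eventually_ne_atTop 0] with n hn
    exact continuousOn_const.mul ((HasDerivAt.continuousOn hderiv).comp (by fun_prop)
      (mapsTo_div_add_Icc (by positivity) t₀ e))
  · filter_upwards [eventually_ne_atTop 0] with n hn s hs
    have hmvt := (convex_Icc _ _).mul_abs_sub_le_abs_sub_of_hasDerivAt_le_neg hderiv hg'm ht₀
      (mapsTo_div_add_Icc (by positivity) t₀ e hs)
    have hn' : (0 : ℝ) < n := by positivity
    calc m * |s| = n * (m * |s / n + t₀ - t₀|) := by
          rw [add_sub_cancel_right, abs_div, Nat.abs_cast]; field_simp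
      _ ≤ n * |g (s / n + t₀) - g t₀| := by gcongr
      _ = |n * g (s / n + t₀)| := by rw [hg0, sub_zero, abs_mul, Nat.abs_cast]
  · filter_upwards [eventually_ne_atTop 0] with n hn
    exact (intervalIntegral_f_comp_eq hn g t₀ e).symm
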